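/- arXiv:2208.01738 — 2 statements merged into one kernel-verified Lean document; each statement's English description precedes it below -/
import Mathlib

section
/- Fix N ≥ 1, weights w : Fin N → ℝ with w_i ≥ 0, and P : Fin N → Fin N → ℝ with entries p_{ij} ∈ [0,1]. Let D = {π ∈ ℝ^N : π_j ≥ 0 for all j, Σ_j π_j = 1, and Σ_j π_j p_{ji} > 0 for all i}, and let f(π) = Σ_i w_i / (Σ_j π_j p_{ji}). Suppose π* ∈ D minimizes f over D. For each source j write Ā_j = 1/(Σ_k π*_k p_{kj}). Then for any two indices i and i' with π*_i > 0 and π*_{i'} > 0, one has Σ_j p_{ij} w_j Ā_j² = Σ_j p_{i'j} w_j Ā_j². -/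
/-!
Moving probability mass `t` from a scheduled source `i` to a scheduled source `i'` keeps the
policy feasible for all small `t` of either sign, so `t = 0` is a local minimum of the objective
along this line. The derivative there is `∑ j, w j (p_{i'j} - p_{ij}) Ā_j²`, which must vanish.
-/

open Finset Filter Topology Matrix

namespace AgeOfInformation

variable {ι : Type*} [Fintype ι]

def policies (P : Matrix ι ι ℝ) : Set (ι → ℝ) :=
  {π | (∀ j, 0 ≤ π j) ∧ ∑ j, π j = 1 ∧ ∀ i, 0 < (π ᵥ* P) i}

/-- `1 / (π ᵥ* P) i` is the average age `Ā_i` of source `i` under the randomized policy `π`. -/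
noncomputable def weightedAge (w : ι → ℝ) (P : Matrix ι ι ℝ) (π : ι → ℝ) : ℝ :=
  ∑ i, w i / (π ᵥ* P) i

theorem hasDerivAt_sum_div_affine (w S c : ι → ℝ) (hS : ∀ j, S j ≠ 0) :
    HasDerivAt (fun t => ∑ j, w j / (S j + t * c j)) (-∑ j, w j * c j / S j ^ 2) 0 := by
  rw [← Finset.sum_neg_distrib]
  refine HasDerivAt.fun_sum fun j _ => ?_
  have hlin : HasDerivAt (fun t => S j + t * c j) (c j) 0 := by
    simpa using ((hasDerivAt_id (0 : ℝ)).mul_const (c j)).const_add (S j)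
  refine ((hasDerivAt_const (0 : ℝ) (w j)).fun_div hlin (by simpa using hS j)).congr_deriv ?_
  ring

theorem eventually_add_smul_mem_policies {P : Matrix ι ι ℝ} {π d : ι → ℝ}
    (hπ : π ∈ policies P) (hd_sum : ∑ j, d j = 0) (hd_supp : ∀ j, d j ≠ 0 → 0 < π j) :
    ∀ᶠ t in 𝓝 (0 : ℝ), π + t • d ∈ policies P := by
  obtain ⟨hnonneg, hsum, hload⟩ := hπ
  have hnonneg' : ∀ j, ∀ᶠ t in 𝓝 (0 : ℝ), 0 ≤ (π + t • d) j := by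
    intro j
    by_cases hdj : d j = 0
    · exact Eventually.of_forall fun t => by simpa [hdj] using hnonneg j
    · have : Continuous fun t : ℝ => (π + t • d) j := by fun_prop
      exact (this.tendsto' 0 _ (by simp)).eventually (eventually_ge_nhds (hd_supp j hdj))
  have hload' : ∀ i, ∀ᶠ t in 𝓝 (0 : ℝ), 0 < ((π + t • d) ᵥ* P) i := by
    intro i
    have : Continuous fun t : ℝ => ((π + t • d) ᵥ* P) i := by
      simp only [add_vecMul, smul_vecMul]
      fun_prop
    exact (this.tendsto' 0 _ (by simp)).eventually (eventually_gt_nhds (hload i))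
  filter_upwards [eventually_all.2 hnonneg', eventually_all.2 hload'] with t h₁ h₂
  refine ⟨h₁, ?_, h₂⟩
  simp [Finset.sum_add_distrib, ← Finset.mul_sum, hsum, hd_sum]

theorem sum_mul_vecMul_div_sq_eq_zero_of_isMinOn {w : ι → ℝ} {P : Matrix ι ι ℝ} {π d : ι → ℝ}
    (hπ : π ∈ policies P) (hmin : IsMinOn (weightedAge w P) (policies P) π)
    (hd_sum : ∑ j, d j = 0) (hd_supp : ∀ j, d j ≠ 0 → 0 < π j) :
    ∑ j, w j * (d ᵥ* P) j / (π ᵥ* P) j ^ 2 = 0 := by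
  have hline : (fun t : ℝ => weightedAge w P (π + t • d)) =
      fun t => ∑ j, w j / ((π ᵥ* P) j + t * (d ᵥ* P) j) := by
    ext t
    simp [weightedAge, add_vecMul, smul_vecMul]
  have hloc : IsLocalMin (fun t : ℝ => weightedAge w P (π + t • d)) 0 := by
    filter_upwards [eventually_add_smul_mem_policies hπ hd_sum hd_supp] with t ht
    simpa using hmin ht
  rw [hline] at hloc
  exact neg_eq_zero.1 <| hloc.hasDerivAt_eq_zero <|
    hasDerivAt_sum_div_affine _ _ _ fun j => (hπ.2.2 j).ne'

end AgeOfInformation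

theorem stmt4_general
    (N : ℕ)
    (w : Fin N → ℝ)
    (P : Fin N → Fin N → ℝ)
    (D : Set (Fin N → ℝ))
    (hD : D = {π : Fin N → ℝ |
      (∀ j, 0 ≤ π j) ∧ (∑ j, π j = 1) ∧ ∀ i, 0 < ∑ j, π j * P j i})
    (f : (Fin N → ℝ) → ℝ)
    (hf : f = fun π => ∑ i, w i / ∑ j, π j * P j i)
    (πs : Fin N → ℝ) (hmem : πs ∈ D)
    (hmin : ∀ π ∈ D, f πs ≤ f π)
    (A : Fin N → ℝ) (hA : ∀ j, A j = 1 / ∑ k, πs k * P k j) :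
    ∀ i i', 0 < πs i → 0 < πs i' →
      ∑ j, P i j * w j * (A j) ^ 2 = ∑ j, P i' j * w j * (A j) ^ 2 := by
  intro i i' hi hi'
  subst hD hf
  set d : Fin N → ℝ := Pi.single i' 1 - Pi.single i 1
  have hd_supp : ∀ j, d j ≠ 0 → 0 < πs j := by
    intro j hj
    by_cases hji : j = i
    · exact hji ▸ hi
    by_cases hji' : j = i'
    · exact hji' ▸ hi'
    simp [d, hji, hji'] at hj
  have hfirst := AgeOfInformation.sum_mul_vecMul_div_sq_eq_zero_of_isMinOn (w := w) (P := P) hmem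
    (isMinOn_iff.2 hmin) (by simp [d]) hd_supp
  have hdP : ∀ j, (d ᵥ* P) j = P i' j - P i j := fun j => by
    simp [d, vecMul, sub_dotProduct]
  refine (sub_eq_zero.1 ?_).symm
  rw [← hfirst, ← Finset.sum_sub_distrib]
  refine Finset.sum_congr rfl fun j _ => ?_
  rw [hdP, hA]
  change _ = _ / (∑ k, πs k * P k j) ^ 2
  ring

/-- First-order optimality structure of the optimal stationary randomized policy:
at an optimum, `∑_j p_{ij} w_j Ā_j²` is constant over sources scheduled with
positive probability. -/
theorem stmt4
    (N : ℕ) (hN : 1 ≤ N)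
    (w : Fin N → ℝ) (hw : ∀ i, 0 ≤ w i)
    (P : Fin N → Fin N → ℝ) (hP : ∀ i j, P i j ∈ Set.Icc (0 : ℝ) 1)
    (D : Set (Fin N → ℝ))
    (hD : D = {π : Fin N → ℝ |
      (∀ j, 0 ≤ π j) ∧ (∑ j, π j = 1) ∧ ∀ i, 0 < ∑ j, π j * P j i})
    (f : (Fin N → ℝ) → ℝ)
    (hf : f = fun π => ∑ i, w i / ∑ j, π j * P j i)
    (πs : Fin N → ℝ) (hmem : πs ∈ D)
    (hmin : ∀ π ∈ D, f πs ≤ f π)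
    (A : Fin N → ℝ) (hA : ∀ j, A j = 1 / ∑ k, πs k * P k j) :
    ∀ i i', 0 < πs i → 0 < πs i' →
      ∑ j, P i j * w j * (A j) ^ 2 = ∑ j, P i' j * w j * (A j) ^ 2 :=
  stmt4_general N w P D hD f hf πs hmem hmin A hA
end

section
/- Let N ≥ 1 and let u : Fin N → ℕ → {0,1} be a schedule with Σ_j u_j(t) ≤ 1 for every t. Let X, X' : Fin N → Fin N → ℕ → {0,1} satisfy X_{ji}(t) ≥ X'_{ji}(t) for all j, i, t. Define two Age of Information trajectories by A_i(t+1) = A_i(t) + 1 − A_i(t)·Σ_j u_j(t)·X_{ji}(t) and A'_i(t+1) = A'_i(t) + 1 − A'_i(t)·Σ_j u_j(t)·X'_{ji}(t), with common nonnegative initial conditions A_i(1) = A'_i(1) ≥ 0. Then A_i(t) ≤ A'_i(t) for all i and all t ≥ 1. -/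
/-! Writing the recursion as `A(t+1) = A(t) (1 - S(t)) + 1` with `S(t) = Σ_j u_j(t) X_{ji}(t)`,
the map `a ↦ a (1 - s) + 1` is monotone in `a` as long as `s ≤ 1` (at most one source transmits
and `X ≤ 1`), and monotone decreasing in `s` as long as `a ≥ 0`. Since the larger correlation
gives the larger delivery sum `S ≥ S'`, an induction on `t` carrying `0 ≤ A ≤ A'` closes. -/

lemma age_update_nonneg {a s : ℝ} (ha : 0 ≤ a) (hs : s ≤ 1) : 0 ≤ a + 1 - a * s := by
  nlinarith

lemma age_update_le_age_update {a a' s s' : ℝ} (ha : 0 ≤ a) (haa' : a ≤ a') (hs : s ≤ 1)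
    (hs's : s' ≤ s) : a + 1 - a * s ≤ a' + 1 - a' * s' := by
  nlinarith

lemma age_le_age_of_delivery_le (a a' s s' : ℕ → ℝ) (hs : ∀ t, s t ≤ 1) (hs's : ∀ t, s' t ≤ s t)
    (hinit : a 1 = a' 1) (hinit0 : 0 ≤ a 1)
    (ha : ∀ t, 1 ≤ t → a (t + 1) = a t + 1 - a t * s t)
    (ha' : ∀ t, 1 ≤ t → a' (t + 1) = a' t + 1 - a' t * s' t) :
    ∀ t, 1 ≤ t → 0 ≤ a t ∧ a t ≤ a' t := by
  refine Nat.le_induction ⟨hinit0, hinit.le⟩ fun t ht ⟨h0, hle⟩ => ?_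
  rw [ha t ht, ha' t ht]
  exact ⟨age_update_nonneg h0 (hs t), age_update_le_age_update h0 hle (hs t) (hs's t)⟩

lemma sum_mul_le_one {ι : Type*} [Fintype ι] {u x : ι → ℝ} (hu : ∀ j, 0 ≤ u j)
    (hx : ∀ j, x j ≤ 1) (hsum : ∑ j, u j ≤ 1) : ∑ j, u j * x j ≤ 1 :=
  (Finset.sum_le_sum fun j _ => mul_le_of_le_one_right (hu j) (hx j)).trans hsum

theorem stmt15_general
    (N : ℕ)
    (u : Fin N → ℕ → ℝ)
    (hu01 : ∀ j t, u j t = 0 ∨ u j t = 1)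
    (husum : ∀ t, ∑ j, u j t ≤ 1)
    (X X' : Fin N → Fin N → ℕ → ℝ)
    (hX01 : ∀ j i t, X j i t = 0 ∨ X j i t = 1)
    (hdom : ∀ j i t, X' j i t ≤ X j i t)
    (A A' : Fin N → ℕ → ℝ)
    (hinit : ∀ i, A i 1 = A' i 1)
    (hinit0 : ∀ i, 0 ≤ A i 1)
    (hArec : ∀ i t, 1 ≤ t →
      A i (t + 1) = A i t + 1 - A i t * ∑ j, u j t * X j i t)
    (hA'rec : ∀ i t, 1 ≤ t →
      A' i (t + 1) = A' i t + 1 - A' i t * ∑ j, u j t * X' j i t) :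
    ∀ i, ∀ t, 1 ≤ t → A i t ≤ A' i t := by
  intro i t ht
  have hu0 : ∀ j t, 0 ≤ u j t := fun j t => by rcases hu01 j t with h | h <;> simp [h]
  have hX1 : ∀ j i t, X j i t ≤ 1 := fun j i t => by rcases hX01 j i t with h | h <;> simp [h]
  refine (age_le_age_of_delivery_le (A i) (A' i) _ _ (fun t => ?_) (fun t => ?_) (hinit i)
    (hinit0 i) (hArec i) (hA'rec i) t ht).2
  · exact sum_mul_le_one (hu0 · t) (hX1 · i t) (husum t)
  · exact Finset.sum_le_sum fun j _ => mul_le_mul_of_nonneg_left (hdom j i t) (hu0 j t)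

/-- Monotonicity of AoI in the correlation variables: pathwise domination of the
delivery indicators gives pathwise domination of the Age of Information. -/
theorem stmt15
    (N : ℕ) (hN : 1 ≤ N)
    (u : Fin N → ℕ → ℝ)
    (hu01 : ∀ j t, u j t = 0 ∨ u j t = 1)
    (husum : ∀ t, ∑ j, u j t ≤ 1)
    (X X' : Fin N → Fin N → ℕ → ℝ)
    (hX01 : ∀ j i t, X j i t = 0 ∨ X j i t = 1)
    (hX'01 : ∀ j i t, X' j i t = 0 ∨ X' j i t = 1)
    (hdom : ∀ j i t, X' j i t ≤ X j i t)
    (A A' : Fin N → ℕ → ℝ)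
    (hinit : ∀ i, A i 1 = A' i 1)
    (hinit0 : ∀ i, 0 ≤ A i 1)
    (hArec : ∀ i t, 1 ≤ t →
      A i (t + 1) = A i t + 1 - A i t * ∑ j, u j t * X j i t)
    (hA'rec : ∀ i t, 1 ≤ t →
      A' i (t + 1) = A' i t + 1 - A' i t * ∑ j, u j t * X' j i t) :
    ∀ i, ∀ t, 1 ≤ t → A i t ≤ A' i t :=
  stmt15_general N u hu01 husum X X' hX01 hdom A A' hinit hinit0 hArec hA'rec
end
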